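/- Let p be a prime number and let M' be a module over the group algebra ℤ[C_p] that is finitely generated and free as a ℤ-module. Suppose M' is a direct summand, as a ℤ[C_p]-module, of a module of the form ℤ^a ⊕ (ℤ[C_p])^b for some natural numbers a, b, where C_p acts trivially on the factor ℤ^a. If the C_p-action on M' is nontrivial (some group element acts non-identically), then the rank of M' as a ℤ-module is at least p. -/

import Mathlib

/-- `ℤ^a`, regarded as a module over the group algebra `ℤ[C_p]` with trivial
`C_p`-action, i.e. with the module structure obtained by restriction of scalars
along the augmentation homomorphism `ℤ[C_p] → ℤ`. -/
def TrivModInt (p : ℕ) (a : ℕ) : Type := Fin a → ℤ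

instance (p a : ℕ) : AddCommGroup (TrivModInt p a) :=
  inferInstanceAs (AddCommGroup (Fin a → ℤ))

noncomputable instance (p a : ℕ) :
    Module (MonoidAlgebra ℤ (Multiplicative (ZMod p))) (TrivModInt p a) :=
  Module.compHom (Fin a → ℤ)
    (MonoidAlgebra.lift ℤ ℤ (Multiplicative (ZMod p))
      (1 : Multiplicative (ZMod p) →* ℤ)).toRingHom

open Polynomial Finset

noncomputable def aug (p : ℕ) : MonoidAlgebra ℤ (Multiplicative (ZMod p)) →ₐ[ℤ] ℤ :=
  MonoidAlgebra.lift ℤ ℤ (Multiplicative (ZMod p)) (1 : Multiplicative (ZMod p) →* ℤ)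

lemma aug_of {p : ℕ} (g : Multiplicative (ZMod p)) :
    aug p (MonoidAlgebra.of ℤ (Multiplicative (ZMod p)) g) = 1 := by
  simp [aug]

section Aux
variable {p : ℕ} [Fact p.Prime]

instance : NeZero p := ⟨(Fact.out : p.Prime).ne_zero⟩

noncomputable abbrev nu (p : ℕ) [Fact p.Prime] : MonoidAlgebra ℤ (Multiplicative (ZMod p)) :=
  ∑ h : Multiplicative (ZMod p), MonoidAlgebra.of ℤ (Multiplicative (ZMod p)) h

lemma nu_mul (r : MonoidAlgebra ℤ (Multiplicative (ZMod p))) :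
    nu p * r = aug p r • nu p := by
  induction r using MonoidAlgebra.induction_on with
  | of h =>
      rw [aug_of, one_smul, Finset.sum_mul]
      exact Fintype.sum_bijective (Equiv.mulRight h) (Equiv.bijective _) _ _
        (fun h' => by simp [MonoidAlgebra.of_apply, MonoidAlgebra.single_mul_single])
  | add f₁ f₂ h₁ h₂ => rw [mul_add, h₁, h₂, map_add, add_smul]
  | smul c f h => rw [mul_smul_comm, h, map_smul, smul_assoc]

lemma aug_nu : aug p (nu p) = p := by
  rw [map_sum]
  simp only [aug_of]
  simp [ZMod.card p]

lemma nu_apply_one : (nu p).coeff (1 : Multiplicative (ZMod p)) = 1 := by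
  classical
  simp only [nu, MonoidAlgebra.of_apply]
  rw [MonoidAlgebra.coeff_sum, Finsupp.finset_sum_apply]
  simp [MonoidAlgebra.coeff_single, Finsupp.single_apply]

lemma aug_eq_zero_of_nu_smul {c : ℤ} (h : c • nu p = 0) : c = 0 := by
  have h1 : (c • nu p).coeff (1 : Multiplicative (ZMod p)) = 0 := by rw [h]; rfl
  rw [MonoidAlgebra.coeff_smul_apply, nu_apply_one, smul_eq_mul, mul_one] at h1
  exact h1

lemma exists_eq_sub_one_mul {g : Multiplicative (ZMod p)}
    (hsurj : ∀ h : Multiplicative (ZMod p), ∃ k : ℕ, g ^ k = h)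
    {r : MonoidAlgebra ℤ (Multiplicative (ZMod p))} (hr : aug p r = 0) :
    ∃ s, r = (MonoidAlgebra.of ℤ (Multiplicative (ZMod p)) g - 1) * s := by
  set u := MonoidAlgebra.of ℤ (Multiplicative (ZMod p)) g with hu
  have hmem : ∀ t : MonoidAlgebra ℤ (Multiplicative (ZMod p)),
      t - aug p t • 1 ∈ Ideal.span {u - 1} := by
    intro t
    induction t using MonoidAlgebra.induction_on with
    | of h =>
        obtain ⟨k, hk⟩ := hsurj h
        rw [aug_of, one_smul, ← hk, map_pow]
        refine Ideal.mem_span_singleton'.mpr ⟨∑ i ∈ range k, u ^ i, ?_⟩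
        rw [geom_sum_mul]
    | add f₁ f₂ h₁ h₂ =>
        have : f₁ + f₂ - aug p (f₁ + f₂) • 1
            = (f₁ - aug p f₁ • 1) + (f₂ - aug p f₂ • 1) := by
          rw [map_add, add_smul]; abel
        rw [this]; exact Ideal.add_mem _ h₁ h₂
    | smul c f h =>
        have : c • f - aug p (c • f) • 1 = c • (f - aug p f • 1) := by
          rw [map_smul, smul_sub, smul_assoc]
        rw [this, Algebra.smul_def]
        exact Ideal.mul_mem_left _ _ h
  have := hmem r
  rw [hr, zero_smul, sub_zero] at this
  obtain ⟨s, hs⟩ := Ideal.mem_span_singleton'.mp this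
  exact ⟨s, by rw [← hs, mul_comm]⟩

end Aux

lemma smul_triv_def {p : ℕ} (a : ℕ) (r : MonoidAlgebra ℤ (Multiplicative (ZMod p)))
    (t : TrivModInt p a) :
    (show Fin a → ℤ from r • t) = aug p r • (show Fin a → ℤ from t) := rfl

/-- Let `p` be prime and `M'` a `ℤ[C_p]`-module, finitely generated and free
over `ℤ`, which is a direct summand of some `ℤ^a ⊕ (ℤ[C_p])^b` (with trivial
`C_p`-action on `ℤ^a`). If the `C_p`-action on `M'` is nontrivial, then the
rank of `M'` as a `ℤ`-module is at least `p`. -/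
theorem rank_ge_of_nontrivial_invertible (p : ℕ) (hp : p.Prime)
    (M' : Type) [AddCommGroup M']
    [Module (MonoidAlgebra ℤ (Multiplicative (ZMod p))) M']
    [Module.Finite ℤ M'] [Module.Free ℤ M']
    (hsum : ∃ (a b : ℕ) (N : Type) (_ : AddCommGroup N)
      (_ : Module (MonoidAlgebra ℤ (Multiplicative (ZMod p))) N),
      Nonempty ((M' × N) ≃ₗ[MonoidAlgebra ℤ (Multiplicative (ZMod p))]
        (TrivModInt p a × (Fin b → MonoidAlgebra ℤ (Multiplicative (ZMod p))))))
    (hnt : ∃ (g : Multiplicative (ZMod p)) (x : M'),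
      MonoidAlgebra.of ℤ (Multiplicative (ZMod p)) g • x ≠ x) :
    p ≤ Module.finrank ℤ M' := by
  classical
  haveI fact : Fact p.Prime := ⟨hp⟩
  obtain ⟨g, x, hgx⟩ := hnt
  set u : MonoidAlgebra ℤ (Multiplicative (ZMod p)) :=
    MonoidAlgebra.of ℤ (Multiplicative (ZMod p)) g with hu
  -- basic group facts
  have hg1 : g ≠ 1 := by
    rintro rfl
    exact hgx (by rw [hu, map_one, one_smul])
  have hcard : Fintype.card (Multiplicative (ZMod p)) = p := by
    rw [Fintype.card_multiplicative]; exact ZMod.card p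
  have horder : orderOf g = p := by
    rcases hp.eq_one_or_self_of_dvd _ (hcard ▸ orderOf_dvd_card (x := g)) with h | h
    · exact absurd (orderOf_eq_one_iff.mp h) hg1
    · exact h
  have hbij : Function.Bijective (fun i : Fin p => g ^ (i : ℕ)) := by
    rw [Fintype.bijective_iff_injective_and_card, Fintype.card_fin, hcard]
    refine ⟨fun i j hij => ?_, rfl⟩
    exact Fin.ext (pow_injOn_Iio_orderOf (by simpa [horder] using i.2)
      (by simpa [horder] using j.2) hij)
  have hsurjpow : ∀ h : Multiplicative (ZMod p), ∃ k : ℕ, g ^ k = h := by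
    intro h
    obtain ⟨i, hi⟩ := hbij.2 h
    exact ⟨i, hi⟩
  -- the C_p action as a ℤ-linear endomorphism
  have hcomm : ∀ (c : ℤ) (r : MonoidAlgebra ℤ (Multiplicative (ZMod p))) (y : M'),
      r • (c • y) = c • (r • y) := fun c r y => smul_comm r c y
  let σ : Module.End ℤ M' :=
    { toFun := fun y => u • y
      map_add' := fun y z => smul_add u y z
      map_smul' := fun c y => hcomm c u y }
  have hσ_apply : ∀ y : M', σ y = u • y := fun _ => rfl
  have hσ_pow : ∀ (i : ℕ) (y : M'), (σ ^ i) y = (u ^ i) • y := by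
    intro i
    induction i with
    | zero => intro y; simp
    | succ i ih =>
        intro y
        rw [pow_succ', pow_succ', Module.End.mul_apply, ih, hσ_apply, mul_smul]
  -- Part 1 : the direct-summand argument
  obtain ⟨a, b, Ncomp, iN, iMN, ⟨e⟩⟩ := hsum
  have part1 : (∀ y : M', nu p • y = 0) → Function.Surjective ⇑(σ - 1) := by
    intro hν0 y
    have hνv : nu p • (e (y, (0 : Ncomp))) = 0 := by
      rw [← map_smul, Prod.smul_mk, hν0 y, smul_zero]
      rw [show ((0 : M'), (0 : Ncomp)) = (0 : M' × Ncomp) from rfl, map_zero]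
    set v := e (y, (0 : Ncomp)) with hv
    have hv1 : v.1 = 0 := by
      have h1 : nu p • v.1 = 0 := by
        rw [show nu p • v.1 = (nu p • v).1 from rfl, hνv]; rfl
      have h3 : (p : ℤ) • (show Fin a → ℤ from v.1) = 0 := by
        rw [← aug_nu (p := p), ← smul_triv_def a (nu p) v.1]
        exact h1
      have hp0 : ((p : ℤ)) ≠ 0 := Int.natCast_ne_zero.mpr hp.ne_zero
      have h4 : (show Fin a → ℤ from v.1) = 0 :=
        smul_right_injective (Fin a → ℤ) hp0
          (show (p:ℤ) • (show Fin a → ℤ from v.1) = (p:ℤ) • (0 : Fin a → ℤ) by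
            rw [h3, smul_zero])
      exact h4
    have hv2 : ∀ j : Fin b, ∃ s, v.2 j = (u - 1) * s := by
      intro j
      have h1 : nu p • v.2 j = 0 := by
        rw [show nu p • v.2 j = (nu p • v).2 j from rfl, hνv]; rfl
      rw [smul_eq_mul, nu_mul] at h1
      have h2 : aug p (v.2 j) = 0 := aug_eq_zero_of_nu_smul h1
      exact exists_eq_sub_one_mul hsurjpow h2
    choose s hs using hv2
    have hw : (u - 1) • (((0 : TrivModInt p a), s) :
        TrivModInt p a × (Fin b → MonoidAlgebra ℤ (Multiplicative (ZMod p)))) = v := by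
      refine Prod.ext ?_ ?_
      · rw [Prod.smul_mk]; rw [smul_zero, hv1]
      · rw [Prod.smul_mk]
        show (u - 1) • s = v.2
        funext j
        rw [Pi.smul_apply, smul_eq_mul, ← hs j]
    refine ⟨(e.symm ((0 : TrivModInt p a), s)).1, ?_⟩
    have h4 : (u - 1) • (e.symm ((0 : TrivModInt p a), s)) = (y, (0 : Ncomp)) := by
      rw [← map_smul, hw, hv, e.symm_apply_apply]
    have h5 : (u - 1) • (e.symm ((0 : TrivModInt p a), s)).1 = y :=
      congrArg Prod.fst h4
    rw [LinearMap.sub_apply, Module.End.one_apply, hσ_apply, ← h5, sub_smul, one_smul]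
  -- Part 2 : linear algebra over ℤ and ℚ
  by_contra hlt
  push_neg at hlt
  haveI : Nontrivial M' := nontrivial_of_ne _ _ hgx
  set n := Module.finrank ℤ M' with hn
  let ι := Module.Free.ChooseBasisIndex ℤ M'
  let bM : Module.Basis ι ℤ M' := Module.Free.chooseBasis ℤ M'
  let toM := LinearMap.toMatrixAlgEquiv bM
  set A : Matrix ι ι ℤ := toM σ with hA
  have hcardι : Fintype.card ι = n := (Module.finrank_eq_card_chooseBasisIndex ℤ M').symm
  haveI : Nonempty ι := by
    rw [← Fintype.card_pos_iff, hcardι, hn]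
    exact Module.finrank_pos
  have hgp : g ^ p = 1 := by
    have h0 := pow_orderOf_eq_one g
    rwa [horder] at h0
  have hσp : σ ^ p = 1 := by
    apply LinearMap.ext; intro y
    rw [hσ_pow, hu, ← map_pow, hgp, map_one, one_smul, Module.End.one_apply]
  have hAp : A ^ p = 1 := by rw [hA, ← map_pow, hσp, map_one]
  have hAne : A ≠ 1 := by
    intro h
    have hσ1 : σ = 1 := by
      apply toM.injective; rw [map_one, ← hA]; exact h
    exact hgx (by rw [← hσ_apply x, hσ1, Module.End.one_apply])
  -- over ℚ
  set B : Matrix ι ι ℚ := (Int.castRingHom ℚ).mapMatrix A with hB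
  have hBp : B ^ p = 1 := by rw [hB, ← map_pow, hAp, map_one]
  have hBne : B ≠ 1 := by
    intro h
    apply hAne
    have hh : A.map (Int.cast : ℤ → ℚ) = (1 : Matrix ι ι ℤ).map (Int.cast : ℤ → ℚ) := by
      rw [show A.map (Int.cast : ℤ → ℚ) = B from rfl, h,
        Matrix.map_one _ Int.cast_zero Int.cast_one]
    exact Matrix.map_injective Int.cast_injective hh
  have hint : IsIntegral ℚ B := ⟨B.charpoly, B.charpoly_monic, B.aeval_self_charpoly⟩
  set m := minpoly ℚ B with hm
  have hmdvd : m ∣ (X - 1) * cyclotomic p ℚ := by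
    apply minpoly.dvd
    have hXp : (X - 1 : ℚ[X]) * cyclotomic p ℚ = X ^ p - 1 := by
      rw [mul_comm, cyclotomic_prime_mul_X_sub_one]
    rw [hXp, map_sub, map_one, map_pow, aeval_X, hBp, sub_self]
  have hΦirr : Irreducible (cyclotomic p ℚ) := cyclotomic.irreducible_rat hp.pos
  have hΦdvd : cyclotomic p ℚ ∣ m := by
    by_contra hnd
    have hcop : IsCoprime (cyclotomic p ℚ) m := (hΦirr.coprime_iff_not_dvd).mpr hnd
    have hmX : m ∣ X - 1 := hcop.symm.dvd_of_dvd_mul_right hmdvd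
    have hmm : m.Monic := minpoly.monic hint
    have hXm : (X - 1 : ℚ[X]).Monic := by
      simpa using monic_X_sub_C (1 : ℚ)
    have hdeg1 : (X - 1 : ℚ[X]).natDegree ≤ m.natDegree := by
      have h2 : 0 < m.natDegree := minpoly.natDegree_pos hint
      have h3 : (X - 1 : ℚ[X]).natDegree = 1 := by
        simpa using natDegree_X_sub_C (1 : ℚ)
      omega
    have hmeq : (X - 1 : ℚ[X]) = m := eq_of_monic_of_dvd_of_natDegree_le hmm hXm hmX hdeg1
    have haev := minpoly.aeval ℚ B
    rw [← hm, ← hmeq, map_sub, aeval_X, map_one, sub_eq_zero] at haev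
    exact hBne haev
  have hchidvd : cyclotomic p ℚ ∣ B.charpoly :=
    hΦdvd.trans (minpoly.dvd ℚ B B.aeval_self_charpoly)
  have hdegχ : B.charpoly.natDegree = n := by
    rw [Matrix.charpoly_natDegree_eq_dim, hcardι]
  have hdegΦ : (cyclotomic p ℚ).natDegree = p - 1 := by
    rw [natDegree_cyclotomic, Nat.totient_prime hp]
  have hple : p - 1 ≤ n := by
    have h3 := Polynomial.natDegree_le_of_dvd hchidvd B.charpoly_monic.ne_zero
    rw [hdegχ, hdegΦ] at h3
    exact h3
  have hχeq : B.charpoly = cyclotomic p ℚ :=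
    eq_of_monic_of_dvd_of_natDegree_le (cyclotomic.monic p ℚ) B.charpoly_monic
      hchidvd (by rw [hdegχ, hdegΦ]; omega)
  have hAχ : A.charpoly = cyclotomic p ℤ := by
    have hmap : A.charpoly.map (Int.castRingHom ℚ)
        = (cyclotomic p ℤ).map (Int.castRingHom ℚ) := by
      rw [← Matrix.charpoly_map A (Int.castRingHom ℚ),
        show A.map ⇑(Int.castRingHom ℚ) = B from rfl, hχeq, map_cyclotomic]
    exact Polynomial.map_injective _ Int.cast_injective hmap
  have hsumA : ∑ i ∈ range p, A ^ i = 0 := by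
    have h0 := A.aeval_self_charpoly
    rw [hAχ, cyclotomic_prime ℤ p, map_sum] at h0
    simpa using h0
  have hsumσ : (∑ i ∈ range p, σ ^ i) = 0 := by
    apply toM.injective
    rw [map_sum, map_zero]
    simpa using hsumA
  have hν0 : ∀ y : M', nu p • y = 0 := by
    intro y
    have hνsum : (nu p : MonoidAlgebra ℤ (Multiplicative (ZMod p))) = ∑ i ∈ range p, u ^ i := by
      rw [← Fin.sum_univ_eq_sum_range (fun i => u ^ i) p]
      exact (Fintype.sum_bijective _ hbij _ _ (fun i => by rw [hu, ← map_pow])).symm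
    rw [hνsum, Finset.sum_smul]
    have hc : ∀ i ∈ range p, u ^ i • y = (σ ^ i) y := fun i _ => (hσ_pow i y).symm
    rw [Finset.sum_congr rfl hc, ← LinearMap.sum_apply, hsumσ, LinearMap.zero_apply]
  have hsurj := part1 hν0
  have hinj : Function.Injective ⇑(σ - 1) :=
    OrzechProperty.injective_of_surjective_endomorphism (σ - 1) hsurj
  have hdetunit : IsUnit (LinearMap.det (σ - 1)) := by
    have h4 := (LinearEquiv.ofBijective (σ - 1) ⟨hinj, hsurj⟩).isUnit_det'
    exact h4
  have hdet2 : LinearMap.det (σ - 1) = Matrix.det (A - 1) := by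
    rw [← LinearMap.det_toMatrix bM]
    congr 1
    have h5 : LinearMap.toMatrix bM bM (σ - 1) = toM (σ - 1) := rfl
    rw [h5, map_sub, map_one, hA]
  have hevals : Matrix.det ((1 : Matrix ι ι ℤ) - A) = (p : ℤ) := by
    have h6 : Polynomial.eval 1 A.charpoly
        = (((Polynomial.evalRingHom (1:ℤ))).mapMatrix (Matrix.charmatrix A)).det := by
      rw [← RingHom.map_det]; rfl
    have h7 : ((Polynomial.evalRingHom (1:ℤ))).mapMatrix (Matrix.charmatrix A)
        = (1 : Matrix ι ι ℤ) - A := by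
      ext i j
      by_cases hij : i = j
      · subst hij
        simp [Matrix.charmatrix_apply_eq, Matrix.one_apply, Matrix.sub_apply]
      · simp [Matrix.charmatrix_apply_ne _ _ _ hij, Matrix.one_apply_ne hij,
          Matrix.sub_apply]
    rw [← h7, ← h6, hAχ, eval_one_cyclotomic_prime]
  have hfinal : IsUnit ((p : ℤ)) := by
    have hnegs : (1 : Matrix ι ι ℤ) - A = -(A - 1) := (neg_sub _ _).symm
    rw [hnegs, Matrix.det_neg] at hevals
    have h8 : IsUnit ((-1 : ℤ) ^ Fintype.card ι * Matrix.det (A - 1)) :=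
      ((isUnit_one.neg).pow _).mul (hdet2 ▸ hdetunit)
    rwa [hevals] at h8
  have h9 := Int.isUnit_iff.mp hfinal
  have h10 := hp.two_le
  omega
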